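/- (Theorem 3) If the roll dynamics satisfy φ''(t) = (θ'(t)·ψ'(t)·(I_y − I_z) + τ(t))/I_x, where the control torque is τ = τ_eq + τ_sw with τ_eq = I_x·(v' − γ(φ' − ᵈφ')) − θ'ψ'(I_y − I_z) and τ_sw = −I_x·(c₁·sg(s) + c₂·s), then the Lyapunov function V(t) = (1/2)s(t)² has derivative V'(t) = −c₁·s(t)·sg(s(t)) − c₂·s(t)², and V'(t) ≤ 0 for all t; hence the roll angle control system is Lyapunov stable. -/

import Mathlib

/-!
The equivalent torque `τ_eq` cancels the gyroscopic coupling `θ'ψ'(I_y − I_z)` and the inertia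
`I_x`, so in closed loop the sliding surface obeys `s' = −(c₁·sg(s) + c₂·s)`. Hence
`V' = s·s' = −c₁·s·sg(s) − c₂·s²`, which is nonpositive because `sg` has the sign of its argument.
-/

/-- The saturated sign function with parameter `ε`. -/
noncomputable def sg (ε x : ℝ) : ℝ :=
  if x > ε then 1 else if x < -ε then -1 else x / ε

lemma mul_sg_nonneg {ε : ℝ} (hε : 0 ≤ ε) (x : ℝ) : 0 ≤ x * sg ε x := by
  unfold sg
  split_ifs with hpos hneg
  · linarith
  · linarith
  · rw [← mul_div_assoc]
    exact div_nonneg (mul_self_nonneg x) hε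

lemma HasDerivAt.half_sq {f : ℝ → ℝ} {f' x : ℝ} (hf : HasDerivAt f f' x) :
    HasDerivAt (fun r => 1 / 2 * f r ^ 2) (f x * f') x :=
  ((hf.fun_pow 2).const_mul (1 / 2 : ℝ)).congr_deriv (by norm_num; ring)

lemma accel_eq_of_computed_torque {I a w g u τ : ℝ} (hI : I ≠ 0)
    (hτ : τ = (I * w - g) + -(I * u)) (hdyn : a = (g + τ) / I) : a = w - u := by
  rw [hdyn, hτ]
  field_simp
  ring

theorem roll_controller_stable_general
    (ε lam γ c₁ c₂ Ix Iy Iz : ℝ) (hε0 : 0 < ε)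
    (hc₁ : 0 < c₁) (hc₂ : 0 < c₂) (hIx : Ix ≠ 0)
    (φ dφ θ ψ : ℝ → ℝ)
    (hφ : Differentiable ℝ φ) (hφ' : Differentiable ℝ (deriv φ))
    (hdφ : Differentiable ℝ dφ) (hdφ' : Differentiable ℝ (deriv dφ))
    (e v s tau : ℝ → ℝ)
    (he : e = fun t => φ t - dφ t)
    (hv : v = fun t => deriv dφ t - lam * e t)
    (hs : s = fun t => γ * e t + (deriv φ t - v t))
    (htau : ∀ t, tau t
        = (Ix * (deriv v t - γ * (deriv φ t - deriv dφ t))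
            - deriv θ t * deriv ψ t * (Iy - Iz))
          + (-(Ix * (c₁ * sg ε (s t) + c₂ * s t))))
    (hdyn : ∀ t, deriv (deriv φ) t
        = (deriv θ t * deriv ψ t * (Iy - Iz) + tau t) / Ix) :
    ∀ t, HasDerivAt (fun r => (1 / 2 : ℝ) * s r ^ 2)
        (-(c₁ * s t * sg ε (s t)) - c₂ * s t ^ 2) t ∧
      -(c₁ * s t * sg ε (s t)) - c₂ * s t ^ 2 ≤ 0 := by
  intro t
  have he_deriv : HasDerivAt e (deriv φ t - deriv dφ t) t := by
    rw [he]
    exact (hφ t).hasDerivAt.sub (hdφ t).hasDerivAt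
  have hv_diff : Differentiable ℝ v := by
    rw [hv, he]
    fun_prop
  have hs_deriv : HasDerivAt s
      (γ * (deriv φ t - deriv dφ t) + (deriv (deriv φ) t - deriv v t)) t := by
    rw [hs]
    exact (he_deriv.const_mul γ).add ((hφ' t).hasDerivAt.sub (hv_diff t).hasDerivAt)
  have haccel := accel_eq_of_computed_torque hIx (htau t) (hdyn t)
  have hs_closed_loop : HasDerivAt s (-(c₁ * sg ε (s t) + c₂ * s t)) t := by
    convert hs_deriv using 1
    rw [haccel]
    ring
  refine ⟨hs_closed_loop.half_sq.congr_deriv (by ring), ?_⟩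
  nlinarith [mul_sg_nonneg hε0.le (s t), sq_nonneg (s t)]

/-- Theorem 3: under the roll-torque law `τ = τ_eq + τ_sw`, the Lyapunov
function `V = (1/2)s²` has derivative `−c₁·s·sg(s) − c₂·s² ≤ 0`; the roll
angle control system is Lyapunov stable. -/
theorem roll_controller_stable
    (ε lam γ c₁ c₂ Ix Iy Iz : ℝ) (hε0 : 0 < ε) (hε1 : ε < 1)
    (hlam : 0 < lam) (hγ : 0 < γ) (hc₁ : 0 < c₁) (hc₂ : 0 < c₂) (hIx : Ix ≠ 0)
    (φ dφ θ ψ : ℝ → ℝ)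
    (hφ : Differentiable ℝ φ) (hφ' : Differentiable ℝ (deriv φ))
    (hdφ : Differentiable ℝ dφ) (hdφ' : Differentiable ℝ (deriv dφ))
    (hθ : Differentiable ℝ θ) (hθ' : Differentiable ℝ (deriv θ))
    (hψ : Differentiable ℝ ψ) (hψ' : Differentiable ℝ (deriv ψ))
    (e v s tau : ℝ → ℝ)
    (he : e = fun t => φ t - dφ t)
    (hv : v = fun t => deriv dφ t - lam * e t)
    (hs : s = fun t => γ * e t + (deriv φ t - v t))
    (htau : ∀ t, tau t
        = (Ix * (deriv v t - γ * (deriv φ t - deriv dφ t))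
            - deriv θ t * deriv ψ t * (Iy - Iz))
          + (-(Ix * (c₁ * sg ε (s t) + c₂ * s t))))
    (hdyn : ∀ t, deriv (deriv φ) t
        = (deriv θ t * deriv ψ t * (Iy - Iz) + tau t) / Ix) :
    ∀ t, HasDerivAt (fun r => (1 / 2 : ℝ) * s r ^ 2)
        (-(c₁ * s t * sg ε (s t)) - c₂ * s t ^ 2) t ∧
      -(c₁ * s t * sg ε (s t)) - c₂ * s t ^ 2 ≤ 0 :=
  roll_controller_stable_general ε lam γ c₁ c₂ Ix Iy Iz hε0 hc₁ hc₂ hIx φ dφ θ ψ hφ hφ' hdφ hdφ' e v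
    s tau he hv hs htau hdyn
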